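/- Let A be a unital C*-algebra. If some unital Hilbert A-bimodule H contains an almost central unit net for A, then A admits a tracial state. -/

import Mathlib

open scoped ComplexOrder ENNReal
open MulOpposite Filter

noncomputable section

/-- A unital Hilbert bimodule over a unital `ℂ`-algebra with involution: a complex Hilbert
space `H` together with a unital `*`-homomorphism `lmul : A → B(H)` and a unital
`*`-homomorphism `rmul : Aᵐᵒᵖ → B(H)` with commuting ranges. -/
structure HBimod (A : Type*) [Ring A] [StarRing A] [Algebra ℂ A]
    (H : Type*) [NormedAddCommGroup H] [InnerProductSpace ℂ H] [CompleteSpace H] where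
  lmul : A →⋆ₐ[ℂ] (H →L[ℂ] H)
  rmul : Aᵐᵒᵖ →⋆ₐ[ℂ] (H →L[ℂ] H)
  commutes : ∀ (a : A) (b : Aᵐᵒᵖ), Commute (lmul a) (rmul b)

namespace HBimod

variable {A : Type*} [Ring A] [StarRing A] [Algebra ℂ A]
variable {H : Type*} [NormedAddCommGroup H] [InnerProductSpace ℂ H] [CompleteSpace H]
variable {H' : Type*} [NormedAddCommGroup H'] [InnerProductSpace ℂ H'] [CompleteSpace H']

/-- The left action `a · ξ`. -/
def l (M : HBimod A H) (a : A) (ξ : H) : H := M.lmul a ξ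

/-- The right action `ξ · a`. -/
def r (M : HBimod A H) (a : A) (ξ : H) : H := M.rmul (op a) ξ

/-- `V_H(Q, β)`, the set of `(Q,β)`-central unit vectors. -/
def V (M : HBimod A H) (Q : Finset A) (β : ℝ) : Set H :=
  {ξ | ‖ξ‖ = 1 ∧ ∀ x ∈ Q, ‖M.l x ξ - M.r x ξ‖ < β}

/-- `H^B`, the subspace of central vectors for a subset `B ⊆ A`. -/
def central (M : HBimod A H) (B : Set A) : Submodule ℂ H where
  carrier := {ξ | ∀ b ∈ B, M.l b ξ = M.r b ξ}
  add_mem' := by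
    intro x y hx hy b hb
    simp only [Set.mem_setOf_eq, l, r] at *
    rw [map_add, map_add, hx b hb, hy b hb]
  zero_mem' := by
    intro b hb
    simp only [l, r, map_zero]
  smul_mem' := by
    intro c x hx b hb
    simp only [Set.mem_setOf_eq, l, r] at *
    rw [map_smul, map_smul, hx b hb]

theorem mem_central {M : HBimod A H} {B : Set A} {ξ : H} :
    ξ ∈ M.central B ↔ ∀ b ∈ B, M.l b ξ = M.r b ξ := Iff.rfl

theorem isClosed_central (M : HBimod A H) (B : Set A) :
    IsClosed ((M.central B : Submodule ℂ H) : Set H) := by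
  have h : ((M.central B : Submodule ℂ H) : Set H)
      = ⋂ b ∈ B, {ξ : H | M.lmul b ξ = M.rmul (op b) ξ} := by
    ext ξ
    simp only [SetLike.mem_coe, mem_central, Set.mem_iInter, Set.mem_setOf_eq, l, r]
  rw [h]
  exact isClosed_biInter fun b _ =>
    isClosed_eq (M.lmul b).continuous (M.rmul (op b)).continuous

/-- Orthogonal projection onto a closed subspace, as a map `H → H`. -/
def projOn (S : Submodule ℂ H) (hS : IsClosed (S : Set H)) (ξ : H) : H :=
  haveI : CompleteSpace S := hS.completeSpace_coe
  (S.orthogonalProjectionOnto ξ : H)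

/-- `P^B_H`, the orthogonal projection onto the space `H^B` of `B`-central vectors. -/
def P (M : HBimod A H) (B : Set A) (ξ : H) : H :=
  projOn (M.central B) (M.isClosed_central B) ξ

/-- `(ξ i)` is an almost central unit net for `A` consisting of vectors of `S`. -/
def IsAlmostCentralNet {ι : Type*} [pre : Preorder ι] (M : HBimod A H) (S : Set H)
    (ξ : ι → H) : Prop :=
  Nonempty ι ∧ IsDirected ι (· ≤ ·) ∧ (∀ i, ξ i ∈ S ∧ ‖ξ i‖ = 1) ∧
    ∀ a : A, Tendsto (fun i => ‖M.l a (ξ i) - M.r a (ξ i)‖) atTop (nhds 0)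

/-- There exists an almost central unit net for `A` consisting of vectors of `S`. -/
def HasAlmostCentralNet (M : HBimod A H) (S : Set H) : Prop :=
  ∃ (ι : Type*) (pre : Preorder ι) (ξ : ι → H), IsAlmostCentralNet (pre := pre) M S ξ

/-- The Kazhdan-type constant `t^A(Q; H, K) ∈ [0,∞]`. -/
def tConst (M : HBimod A H) (Q : Finset A) (K : Submodule ℂ H) : ℝ≥0∞ :=
  ⨅ ξ ∈ {ξ : H | ξ ∈ Kᗮ ∧ ‖ξ‖ = 1},
    ENNReal.ofReal (Real.sqrt (∑ x ∈ Q, ‖M.l x ξ - M.r x ξ‖ ^ 2))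

/-- `K` is a (closed) sub-bimodule of `H`. -/
def IsSubBimod (M : HBimod A H) (K : Submodule ℂ H) : Prop :=
  IsClosed (K : Set H) ∧ (∀ (a : A), ∀ ξ ∈ K, M.l a ξ ∈ K) ∧
    (∀ (a : A), ∀ ξ ∈ K, M.r a ξ ∈ K)

/-- The closed subspace `closure {a · ξ : a ∈ A}`. -/
def orbitCl (M : HBimod A H) (ξ : H) : Submodule ℂ H :=
  (Submodule.span ℂ {y : H | ∃ a : A, y = M.l a ξ}).topologicalClosure

/-- `H_𝒞`, the smallest closed sub-bimodule of `H` containing `H^A` (the centrally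
generated part of `H`). -/
def centGen (M : HBimod A H) : Submodule ℂ H :=
  sInf {K : Submodule ℂ H | IsSubBimod M K ∧ M.central Set.univ ≤ K}

/-- The conjugation action `π(u) ξ = u · ξ · u*` of unitaries on a bimodule. -/
def conj (M : HBimod A H) (u : A) (ξ : H) : H := M.l u (M.r (star u) ξ)

/-- The subspace of vectors fixed by the conjugation action of all unitaries of `A`. -/
def unitaryFixed (M : HBimod A H) : Submodule ℂ H where
  carrier := {η | ∀ u ∈ unitary A, M.conj u η = η}
  add_mem' := by
    intro x y hx hy u hu
    simp only [Set.mem_setOf_eq, conj, l, r] at *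
    rw [map_add, map_add, hx u hu, hy u hu]
  zero_mem' := by
    intro u hu
    simp only [conj, l, r, map_zero]
  smul_mem' := by
    intro c x hx u hu
    simp only [Set.mem_setOf_eq, conj, l, r] at *
    rw [map_smul, map_smul, hx u hu]

theorem mem_unitaryFixed {M : HBimod A H} {η : H} :
    η ∈ M.unitaryFixed ↔ ∀ u ∈ unitary A, M.conj u η = η := Iff.rfl

theorem isClosed_unitaryFixed (M : HBimod A H) :
    IsClosed ((M.unitaryFixed : Submodule ℂ H) : Set H) := by
  have h : ((M.unitaryFixed : Submodule ℂ H) : Set H)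
      = ⋂ u ∈ unitary A, {η : H | M.conj u η = η} := by
    ext η
    simp only [SetLike.mem_coe, mem_unitaryFixed, Set.mem_iInter, Set.mem_setOf_eq]
  rw [h]
  refine isClosed_biInter fun u _ => isClosed_eq ?_ continuous_id
  exact (M.lmul u).continuous.comp (M.rmul (op (star u))).continuous

theorem isClosed_inf_unitaryFixed (M : HBimod A H) (Hs : Submodule ℂ H)
    (hHs : IsClosed (Hs : Set H)) :
    IsClosed ((Hs ⊓ M.unitaryFixed : Submodule ℂ H) : Set H) := by
  rw [Submodule.coe_inf]
  exact hHs.inter (M.isClosed_unitaryFixed)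

end HBimod

/-- The pair `(A, B)` has property (T). -/
def PropertyTPair (A : Type*) [Ring A] [StarRing A] [Algebra ℂ A] (B : Set A) : Prop :=
  ∃ (F : Finset A) (ε : ℝ), 0 < ε ∧
    ∀ (H : Type*) [NormedAddCommGroup H] [InnerProductSpace ℂ H] [CompleteSpace H]
      (M : HBimod A H), (HBimod.V M F ε).Nonempty → HBimod.central M B ≠ ⊥

/-- The pair `(A, B)` has strong property (T). -/
def StrongPropertyTPair (A : Type*) [Ring A] [StarRing A] [Algebra ℂ A] (B : Set A) : Prop :=
  ∀ α : ℝ, 0 < α → ∃ (Q : Finset A) (β : ℝ), 0 < β ∧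
    ∀ (H : Type*) [NormedAddCommGroup H] [InnerProductSpace ℂ H] [CompleteSpace H]
      (M : HBimod A H), ∀ ξ ∈ HBimod.V M Q β, ‖ξ - HBimod.P M B ξ‖ < α

/-- The pair `(A, B)` is co-rigid. -/
def CoRigid (A : Type*) [Ring A] [StarRing A] [Algebra ℂ A] (B : Set A) : Prop :=
  ∃ (Q : Finset A) (β : ℝ), 0 < β ∧
    ∀ (H : Type*) [NormedAddCommGroup H] [InnerProductSpace ℂ H] [CompleteSpace H]
      (M : HBimod A H),
      (HBimod.V M Q β ∩ (HBimod.central M B : Set H)).Nonempty →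
        HBimod.central M Set.univ ≠ ⊥

/-- The pair `(A, B)` is strongly co-rigid. -/
def StronglyCoRigid (A : Type*) [Ring A] [StarRing A] [Algebra ℂ A] (B : Set A) : Prop :=
  ∀ γ : ℝ, 0 < γ → ∃ (Q : Finset A) (δ : ℝ), 0 < δ ∧
    ∀ (H : Type*) [NormedAddCommGroup H] [InnerProductSpace ℂ H] [CompleteSpace H]
      (M : HBimod A H),
      ∀ ξ ∈ HBimod.V M Q δ ∩ (HBimod.central M B : Set H),
        ‖ξ - HBimod.P M Set.univ ξ‖ < γ

/-- An isometric embedding of Hilbert `A`-bimodules. -/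
structure HBimodIsometry {A : Type*} [Ring A] [StarRing A] [Algebra ℂ A]
    {H : Type*} [NormedAddCommGroup H] [InnerProductSpace ℂ H] [CompleteSpace H]
    {H' : Type*} [NormedAddCommGroup H'] [InnerProductSpace ℂ H'] [CompleteSpace H']
    (M : HBimod A H) (N : HBimod A H') where
  toIsometry : H →ₗᵢ[ℂ] H'
  map_l : ∀ (a : A) (ξ : H), toIsometry (HBimod.l M a ξ) = HBimod.l N a (toIsometry ξ)
  map_r : ∀ (a : A) (ξ : H), toIsometry (HBimod.r M a ξ) = HBimod.r N a (toIsometry ξ)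

end

/-!
The vector states `a ↦ ⟪ξᵢ, a · ξᵢ⟫` of the almost central unit vectors have a weak-* cluster
point `τ` (Banach–Alaoglu), and positivity and `τ 1 = 1` pass to it. For traciality, write
`⟪ξ, ab · ξ⟫ = ⟪a* · ξ, b · ξ⟫` and move `a*` and `b` across `ξ` to the right: this turns it
into `⟪ξ, ξ · ba⟫`, up to errors controlled by `‖x · ξᵢ - ξᵢ · x‖` for `x = a*, b, ba`, which
tend to `0`.
-/

open scoped InnerProductSpace Topology

theorem MapClusterPt.mem_of_isClosed {X ι : Type*} [TopologicalSpace X] {x : X} {l : Filter ι}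
    {u : ι → X} {s : Set X} (hx : MapClusterPt x l u) (hs : IsClosed s)
    (hu : ∀ᶠ i in l, u i ∈ s) : x ∈ s := by
  by_contra hxs
  obtain ⟨i, hi, hi'⟩ :=
    ((hx.frequently (hs.isOpen_compl.mem_nhds hxs)).and_eventually hu).exists
  exact hi hi'

theorem MapClusterPt.eq_of_tendsto {X ι : Type*} [TopologicalSpace X] [T2Space X] {x y : X}
    {l : Filter ι} {u : ι → X} (hx : MapClusterPt x l u) (hu : Tendsto u l (𝓝 y)) : x = y :=
  eq_of_nhds_neBot (hx.clusterPt.mono hu)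

theorem WeakDual.exists_mapClusterPt_of_norm_le {𝕜 E ι : Type*} [NontriviallyNormedField 𝕜]
    [ProperSpace 𝕜] [SeminormedAddCommGroup E] [NormedSpace 𝕜 E] {l : Filter ι} [l.NeBot]
    {φ : ι → StrongDual 𝕜 E} {r : ℝ} (hφ : ∀ i, ‖φ i‖ ≤ r) :
    ∃ τ : WeakDual 𝕜 E, MapClusterPt τ l (fun i => StrongDual.toWeakDual (φ i)) := by
  have hball := WeakDual.isCompact_closedBall (𝕜 := 𝕜) (0 : StrongDual 𝕜 E) r
  obtain ⟨τ, -, hτ⟩ := hball.exists_mapClusterPt (f := l)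
    (u := fun i => StrongDual.toWeakDual (φ i)) <| by
      rw [le_principal_iff, mem_map]
      exact univ_mem' fun i => by simpa using hφ i
  exact ⟨τ, hτ⟩

namespace HBimod

section StarAlgebra

variable {A : Type*} [Ring A] [StarRing A] [Algebra ℂ A]
  {H : Type*} [NormedAddCommGroup H] [InnerProductSpace ℂ H] [CompleteSpace H]
  (M : HBimod A H)

theorem l_one (ξ : H) : M.l 1 ξ = ξ := by simp [l]

theorem l_mul (a b : A) (ξ : H) : M.l (a * b) ξ = M.l a (M.l b ξ) := by simp [l]

theorem r_mul (a b : A) (ξ : H) : M.r (a * b) ξ = M.r b (M.r a ξ) := by simp [r]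

theorem inner_l_left (a : A) (ξ η : H) : ⟪M.l a ξ, η⟫_ℂ = ⟪ξ, M.l (star a) η⟫_ℂ := by
  rw [l, l, map_star, ContinuousLinearMap.star_eq_adjoint,
    ContinuousLinearMap.adjoint_inner_right]

theorem inner_r_left (a : A) (ξ η : H) : ⟪M.r a ξ, η⟫_ℂ = ⟪ξ, M.r (star a) η⟫_ℂ := by
  rw [r, r, op_star, map_star, ContinuousLinearMap.star_eq_adjoint,
    ContinuousLinearMap.adjoint_inner_right]

theorem inner_l_mul_sub_inner_l_mul_comm (ξ : H) (a b : A) :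
    ⟪ξ, M.l (a * b) ξ⟫_ℂ - ⟪ξ, M.l (b * a) ξ⟫_ℂ =
      ⟪M.l (star a) ξ - M.r (star a) ξ, M.l b ξ⟫_ℂ + ⟪M.r (star a) ξ, M.l b ξ - M.r b ξ⟫_ℂ -
        ⟪ξ, M.l (b * a) ξ - M.r (b * a) ξ⟫_ℂ := by
  have hl : ⟪ξ, M.l (a * b) ξ⟫_ℂ = ⟪M.l (star a) ξ, M.l b ξ⟫_ℂ := by
    rw [inner_l_left, star_star, l_mul]
  have hr : ⟪M.r (star a) ξ, M.r b ξ⟫_ℂ = ⟪ξ, M.r (b * a) ξ⟫_ℂ := by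
    rw [inner_r_left, star_star, r_mul]
  rw [hl, inner_sub_left, inner_sub_right, inner_sub_right, hr]
  ring

end StarAlgebra

section CStarAlgebra

variable {A : Type*} [CStarAlgebra A]
  {H : Type*} [NormedAddCommGroup H] [InnerProductSpace ℂ H] [CompleteSpace H]
  (M : HBimod A H)

theorem norm_l_le (a : A) (ξ : H) : ‖M.l a ξ‖ ≤ ‖a‖ * ‖ξ‖ :=
  ((M.lmul a).le_opNorm ξ).trans <|
    mul_le_mul_of_nonneg_right (NonUnitalStarAlgHom.norm_apply_le M.lmul a) (norm_nonneg ξ)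

theorem norm_inner_l_le (a : A) (ξ : H) : ‖⟪ξ, M.l a ξ⟫_ℂ‖ ≤ ‖ξ‖ ^ 2 * ‖a‖ :=
  calc ‖⟪ξ, M.l a ξ⟫_ℂ‖ ≤ ‖ξ‖ * (‖a‖ * ‖ξ‖) :=
        (norm_inner_le_norm _ _).trans (mul_le_mul_of_nonneg_left (M.norm_l_le a ξ) (norm_nonneg ξ))
    _ = ‖ξ‖ ^ 2 * ‖a‖ := by ring

noncomputable def vectorFunctional (ξ : H) : StrongDual ℂ A :=
  LinearMap.mkContinuous
    { toFun := fun a => ⟪ξ, M.l a ξ⟫_ℂ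
      map_add' := fun a b => by simp [l]
      map_smul' := fun c a => by simp [l] }
    (‖ξ‖ ^ 2) (M.norm_inner_l_le · ξ)

theorem vectorFunctional_apply (ξ : H) (a : A) : M.vectorFunctional ξ a = ⟪ξ, M.l a ξ⟫_ℂ := rfl

theorem norm_vectorFunctional_le (ξ : H) : ‖M.vectorFunctional ξ‖ ≤ ‖ξ‖ ^ 2 :=
  LinearMap.mkContinuous_norm_le _ (sq_nonneg _) _

theorem vectorFunctional_one (ξ : H) : M.vectorFunctional ξ 1 = (‖ξ‖ ^ 2 : ℂ) := by
  rw [vectorFunctional_apply, l_one, inner_self_eq_norm_sq_to_K]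
  rfl

theorem vectorFunctional_star_mul_self (ξ : H) (a : A) :
    M.vectorFunctional ξ (star a * a) = (‖M.l a ξ‖ ^ 2 : ℂ) := by
  rw [vectorFunctional_apply, l_mul, ← inner_l_left, inner_self_eq_norm_sq_to_K]
  rfl

theorem norm_vectorFunctional_mul_sub_mul_comm_le (ξ : H) (hξ : ‖ξ‖ = 1) (a b : A) :
    ‖M.vectorFunctional ξ (a * b) - M.vectorFunctional ξ (b * a)‖ ≤
      ‖M.l (star a) ξ - M.r (star a) ξ‖ * ‖b‖ + ‖M.rmul (op (star a))‖ * ‖M.l b ξ - M.r b ξ‖ +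
        ‖M.l (b * a) ξ - M.r (b * a) ξ‖ := by
  rw [vectorFunctional_apply, vectorFunctional_apply, inner_l_mul_sub_inner_l_mul_comm]
  have hlb : ‖M.l b ξ‖ ≤ ‖b‖ := by simpa [hξ] using M.norm_l_le b ξ
  have hra : ‖M.r (star a) ξ‖ ≤ ‖M.rmul (op (star a))‖ := by
    simpa only [r, hξ, mul_one] using (M.rmul (op (star a))).le_opNorm ξ
  refine (norm_sub_le _ _).trans (add_le_add ((norm_add_le _ _).trans (add_le_add ?_ ?_)) ?_)
  · exact (norm_inner_le_norm _ _).trans (mul_le_mul_of_nonneg_left hlb (norm_nonneg _))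
  · exact (norm_inner_le_norm _ _).trans (mul_le_mul_of_nonneg_right hra (norm_nonneg _))
  · exact (norm_inner_le_norm _ _).trans (by rw [hξ, one_mul])

theorem tendsto_vectorFunctional_mul_sub_mul_comm {ι : Type*} {l : Filter ι} {ξ : ι → H}
    (hξ : ∀ i, ‖ξ i‖ = 1) (hc : ∀ a, Tendsto (fun i => ‖M.l a (ξ i) - M.r a (ξ i)‖) l (𝓝 0))
    (a b : A) :
    Tendsto (fun i => M.vectorFunctional (ξ i) (a * b) - M.vectorFunctional (ξ i) (b * a))
      l (𝓝 0) := by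
  refine squeeze_zero_norm (fun i => M.norm_vectorFunctional_mul_sub_mul_comm_le _ (hξ i) a b) ?_
  simpa using (((hc (star a)).mul_const ‖b‖).add
    ((hc b).const_mul ‖M.rmul (op (star a))‖)).add (hc (b * a))

end CStarAlgebra

end HBimod

theorem exists_tracial_state_of_hasAlmostCentralNet (A : Type*) [CStarAlgebra A]
    (H : Type*) [NormedAddCommGroup H] [InnerProductSpace ℂ H] [CompleteSpace H]
    (M : HBimod A H) (h : HBimod.HasAlmostCentralNet M Set.univ) :
    ∃ τ : A →ₗ[ℂ] ℂ, (∀ a : A, 0 ≤ τ (star a * a)) ∧ τ 1 = 1 ∧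
      ∀ a b : A, τ (a * b) = τ (b * a) := by
  obtain ⟨ι, _, ξ, hne, hdir, hunit, hc⟩ := h
  have : (atTop : Filter ι).NeBot := atTop_neBot_iff.mpr ⟨hne, hdir⟩
  have hξ (i : ι) : ‖ξ i‖ = 1 := (hunit i).2
  obtain ⟨τ, hτ⟩ := WeakDual.exists_mapClusterPt_of_norm_le (l := atTop)
    fun i => (M.norm_vectorFunctional_le (ξ i)).trans_eq (by rw [hξ, one_pow])
  have hτ_apply (a : A) : MapClusterPt (τ a) atTop fun i => M.vectorFunctional (ξ i) a :=
    hτ.continuousAt_comp (WeakDual.eval_continuous a).continuousAt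
  refine ⟨(WeakDual.toStrongDual τ : A →L[ℂ] ℂ).toLinearMap, fun a => ?_, ?_, fun a b => ?_⟩
  · refine (hτ_apply (star a * a)).mem_of_isClosed isClosed_Ici (.of_forall fun i => ?_)
    rw [Set.mem_Ici, M.vectorFunctional_star_mul_self]
    exact_mod_cast sq_nonneg ‖M.l a (ξ i)‖
  · refine (hτ_apply 1).eq_of_tendsto (tendsto_const_nhds.congr fun i => ?_)
    rw [M.vectorFunctional_one, hξ, Complex.ofReal_one, one_pow]
  · have hcomm : MapClusterPt (τ (a * b) - τ (b * a)) atTop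
        fun i => M.vectorFunctional (ξ i) (a * b) - M.vectorFunctional (ξ i) (b * a) :=
      hτ.continuousAt_comp
        ((WeakDual.eval_continuous (a * b)).sub (WeakDual.eval_continuous (b * a))).continuousAt
    exact sub_eq_zero.mp <|
      hcomm.eq_of_tendsto (M.tendsto_vectorFunctional_mul_sub_mul_comm hξ hc a b)
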